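/- arXiv:2602.20282 — 2 statements merged into one kernel-verified Lean document; each statement's English description precedes it below -/
import Mathlib

section
/- Define off(X) = X − diag(X) (zeroing the diagonal) and F(S) = c·off(AᵀSA) + I, where 0 < c < 1 and A is column-stochastic. Then for all matrices S, T ∈ ℝ^{n×n}, ‖F(S) − F(T)‖_C ≤ c·‖S − T‖_C. -/
open Matrix

noncomputable def chebNorm {n : ℕ} (M : Matrix (Fin n) (Fin n) ℝ) : ℝ :=
  ⨆ i, ⨆ j, |M i j|

def ColStochastic {n : ℕ} (A : Matrix (Fin n) (Fin n) ℝ) : Prop :=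
  (∀ i j, 0 ≤ A i j) ∧ ∀ j, ∑ i, A i j = 1

/-- off(X) = X − diag(X): zero out the diagonal of X. -/
def offd {n : ℕ} (X : Matrix (Fin n) (Fin n) ℝ) : Matrix (Fin n) (Fin n) ℝ :=
  X - Matrix.diagonal (fun i => X i i)

theorem stmt_2 {n : ℕ} (c : ℝ) (hc0 : 0 < c) (hc1 : c < 1)
    (A : Matrix (Fin n) (Fin n) ℝ) (hA : ColStochastic A)
    (F : Matrix (Fin n) (Fin n) ℝ → Matrix (Fin n) (Fin n) ℝ)
    (hF : ∀ S, F S = c • offd (Aᵀ * S * A) + 1)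
    (S T : Matrix (Fin n) (Fin n) ℝ) :
    chebNorm (F S - F T) ≤ c * chebNorm (S - T) := by
  obtain ⟨hApos, hAsum⟩ := hA
  set N := chebNorm (S - T) with hN
  have hNnonneg : 0 ≤ N := by
    apply Real.iSup_nonneg; intro i
    exact Real.iSup_nonneg fun j => abs_nonneg _
  have hentry : ∀ k l, |(S - T) k l| ≤ N := by
    intro k l
    calc |(S - T) k l| ≤ ⨆ j, |(S - T) k j| :=
          le_ciSup (f := fun j => |(S - T) k j|) (Finite.bddAbove_range _) l
      _ ≤ ⨆ i, ⨆ j, |(S - T) i j| :=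
          le_ciSup (f := fun i => ⨆ j, |(S - T) i j|) (Finite.bddAbove_range _) k
  have hprod : ∀ i j, |(Aᵀ * (S - T) * A) i j| ≤ N := by
    intro i j
    have : (Aᵀ * (S - T) * A) i j = ∑ l, (∑ k, A k i * (S - T) k l) * A l j := by
      simp [Matrix.mul_apply, Matrix.transpose_apply]
    rw [this]
    calc |∑ l, (∑ k, A k i * (S - T) k l) * A l j|
        ≤ ∑ l, |(∑ k, A k i * (S - T) k l) * A l j| := Finset.abs_sum_le_sum_abs _ _
      _ ≤ ∑ l, (∑ k, A k i * N) * A l j := by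
          apply Finset.sum_le_sum; intro l _
          rw [abs_mul, abs_of_nonneg (hApos l j)]
          apply mul_le_mul_of_nonneg_right _ (hApos l j)
          calc |∑ k, A k i * (S - T) k l| ≤ ∑ k, |A k i * (S - T) k l| :=
                Finset.abs_sum_le_sum_abs _ _
            _ ≤ ∑ k, A k i * N := by
                apply Finset.sum_le_sum; intro k _
                rw [abs_mul, abs_of_nonneg (hApos k i)]
                exact mul_le_mul_of_nonneg_left (hentry k l) (hApos k i)
      _ = N := by
          have h1 : ∑ k, A k i * N = N := by rw [← Finset.sum_mul, hAsum, one_mul]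
          simp only [h1]
          rw [← Finset.mul_sum, hAsum j, mul_one]
  apply Real.iSup_le _ (by positivity)
  intro i
  apply Real.iSup_le _ (by positivity)
  intro j
  have hd : (F S - F T) i j = c * (if i = j then 0 else (Aᵀ * (S - T) * A) i j) := by
    simp only [Matrix.sub_apply, hF, Matrix.add_apply, Matrix.smul_apply, offd,
      Matrix.sub_apply, Matrix.diagonal_apply, smul_eq_mul, Matrix.mul_apply,
      Matrix.transpose_apply]
    by_cases h : i = j <;> simp [h, Finset.mul_sum, Finset.sum_sub_distrib] <;> ring_nf <;>
      simp [mul_sub, sub_mul, Finset.sum_sub_distrib, mul_comm, mul_assoc, mul_left_comm]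
  rw [hd, abs_mul, abs_of_pos hc0]
  apply mul_le_mul_of_nonneg_left _ hc0.le
  by_cases h : i = j
  · simp [h, hNnonneg]
  · simp only [h, if_false]; exact hprod i j
end

section
/- Let A ∈ ℝ^{n×n} be column-stochastic, 0 < c < 1, and S ∈ ℝ^{n×n} positive semi-definite with all entries in [0,1]. Then F(S) = c·AᵀSA − c·diag(AᵀSA) + I is positive semi-definite. -/
/-! Writing `M = AᵀSA`, the matrix splits as `c • M + diagonal (1 - c * M i i)`. The first summand
is positive semidefinite as a congruence of `S`, and the diagonal one has nonnegative entries because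
`0 ≤ M i i = aᵀ S a ≤ (∑ k, a k)² = 1` for the nonnegative column `a` of `A` with entries summing
to `1`, and `c < 1`. -/

open Matrix

section

variable {ι κ : Type*}

theorem dotProduct_mulVec_le_sq_sum [Fintype ι] {v : ι → ℝ} (hv : 0 ≤ v) {S : Matrix ι ι ℝ}
    (hS : ∀ i j, S i j ≤ 1) : v ⬝ᵥ S *ᵥ v ≤ (∑ i, v i) ^ 2 := by
  calc v ⬝ᵥ S *ᵥ v = ∑ i, ∑ j, v i * S i j * v j := by
        simp only [dotProduct, mulVec, Finset.mul_sum, mul_assoc]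
    _ ≤ ∑ i, ∑ j, v i * 1 * v j := by
        gcongr with i _ j _
        · exact hv j
        · exact hv i
        · exact hS i j
    _ = (∑ i, v i) ^ 2 := by simp only [mul_one, sq, Finset.sum_mul_sum]

theorem diag_transpose_mul_mul_le_sq_sum [Fintype ι] {A : Matrix ι κ ℝ} (hA : ∀ i j, 0 ≤ A i j)
    {S : Matrix ι ι ℝ} (hS : ∀ i j, S i j ≤ 1) (j : κ) :
    (Aᵀ * S * A) j j ≤ (∑ i, A i j) ^ 2 := by
  have hcol : (Aᵀ * S * A) j j = (fun i => A i j) ⬝ᵥ S *ᵥ (fun i => A i j) := by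
    simp only [mul_apply, transpose_apply, dotProduct, mulVec, Finset.mul_sum, Finset.sum_mul]
    rw [Finset.sum_comm]
    exact Finset.sum_congr rfl fun _ _ => Finset.sum_congr rfl fun _ _ => by ring
  exact hcol ▸ dotProduct_mulVec_le_sq_sum (fun i => hA i j) hS

theorem Matrix.PosSemidef.smul_sub_smul_diagonal_add_one [DecidableEq ι] {M : Matrix ι ι ℝ}
    (hM : M.PosSemidef) {c : ℝ} (hc : 0 ≤ c) (hcM : ∀ i, c * M i i ≤ 1) :
    (c • M - c • diagonal (fun i => M i i) + 1).PosSemidef := by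
  have hsplit : c • M - c • diagonal (fun i => M i i) + 1
      = c • M + diagonal (fun i => 1 - c * M i i) := by
    ext i j
    rcases eq_or_ne i j with rfl | hij
    · simp
    · simp [hij]
  rw [hsplit]
  exact (hM.smul hc).add (posSemidef_diagonal_iff.2 fun i => sub_nonneg.2 (hcM i))

end

theorem stmt_6 {n : ℕ} (c : ℝ) (hc0 : 0 < c) (hc1 : c < 1)
    (A : Matrix (Fin n) (Fin n) ℝ) (hA : ColStochastic A)
    (S : Matrix (Fin n) (Fin n) ℝ) (hpsd : S.PosSemidef)
    (hrange : ∀ i j, 0 ≤ S i j ∧ S i j ≤ 1) :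
    (c • (Aᵀ * S * A) - c • Matrix.diagonal (fun i => (Aᵀ * S * A) i i) + 1).PosSemidef := by
  have hM : (Aᵀ * S * A).PosSemidef := by simpa using hpsd.conjTranspose_mul_mul_same A
  refine hM.smul_sub_smul_diagonal_add_one hc0.le fun i => ?_
  have hMii : (Aᵀ * S * A) i i ≤ 1 := by
    simpa [hA.2 i] using diag_transpose_mul_mul_le_sq_sum hA.1 (fun k l => (hrange k l).2) i
  calc c * (Aᵀ * S * A) i i ≤ 1 * (Aᵀ * S * A) i i :=
        mul_le_mul_of_nonneg_right hc1.le hM.diag_nonneg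
    _ ≤ 1 := by rwa [one_mul]
end
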